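/- arXiv:1810.07778 — 2 statements merged into one kernel-verified Lean document; each statement's English description precedes it below -/
import Mathlib

section
/- The gap between the dynamic and static oracle is bounded by T times the maximum single-step variation: if y_t^n ∈ [0,1] and sup_n |y_t^n − y_{t+1}^n| ≤ v for all t, then Σ_{t=1}^T max_n y_t^n − max_n Σ_{t=1}^T y_t^n ≤ T·(T−1)·v. -/
/-- The gap between the dynamic and static oracle is bounded by
`T * (T-1) * v` where `v` bounds the per-step sup-variation. -/
theorem stmt_4 (T N : ℕ) (hT : 1 ≤ T) (hN : 0 < N)
    (hne : (Finset.univ : Finset (Fin N)).Nonempty)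
    (y : ℕ → Fin N → ℝ) (hy : ∀ t < T, ∀ n, y t n ∈ Set.Icc (0:ℝ) 1)
    (v : ℝ) (hv : 0 ≤ v)
    (hvar : ∀ t, t + 1 < T → ∀ n, |y t n - y (t + 1) n| ≤ v) :
    (∑ t ∈ Finset.range T, Finset.univ.sup' hne (fun n => y t n)) -
      Finset.univ.sup' hne (fun n => ∑ t ∈ Finset.range T, y t n) ≤
      (T : ℝ) * ((T : ℝ) - 1) * v := by
  -- drift bound: |y t n - y 0 n| ≤ t * v for t < T
  have drift : ∀ t, t < T → ∀ n, |y t n - y 0 n| ≤ (t : ℝ) * v := by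
    intro t
    induction t with
    | zero => intro _ n; simp
    | succ t ih =>
      intro ht n
      have ht' : t < T := Nat.lt_of_succ_lt ht
      have h1 := ih ht' n
      have h2 := hvar t ht n
      calc |y (t+1) n - y 0 n| ≤ |y (t+1) n - y t n| + |y t n - y 0 n| := by
            have := abs_sub_le (y (t+1) n) (y t n) (y 0 n); linarith
        _ ≤ v + (t : ℝ) * v := by
            rw [abs_sub_comm] at h2; linarith
        _ = ((t+1 : ℕ) : ℝ) * v := by push_cast; ring
  obtain ⟨m0, _, hm0⟩ := Finset.exists_mem_eq_sup' hne (y 0)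
  have key : ∀ s ∈ Finset.range T,
      Finset.univ.sup' hne (fun n => y s n) ≤ y s m0 + 2 * (s : ℝ) * v := by
    intro s hs
    rw [Finset.mem_range] at hs
    apply Finset.sup'_le
    intro n _
    have h1 := drift s hs n
    have h2 := drift s hs m0
    have h3 : y 0 n ≤ y 0 m0 := by
      rw [← hm0]; exact Finset.le_sup' _ (Finset.mem_univ n)
    have h1' := abs_le.1 h1
    have h2' := abs_le.1 h2
    nlinarith [h1'.1, h1'.2, h2'.1, h2'.2]
  have hlow : ∑ t ∈ Finset.range T, y t m0 ≤
      Finset.univ.sup' hne (fun n => ∑ t ∈ Finset.range T, y t n) :=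
    Finset.le_sup' (fun n => ∑ t ∈ Finset.range T, y t n) (Finset.mem_univ m0)
  have hsum : ∑ s ∈ Finset.range T, (y s m0 + 2 * (s : ℝ) * v)
      = (∑ s ∈ Finset.range T, y s m0) + (T : ℝ) * ((T : ℝ) - 1) * v := by
    rw [Finset.sum_add_distrib]
    congr 1
    have : ∑ s ∈ Finset.range T, (2 * (s : ℝ) * v)
        = (∑ s ∈ Finset.range T, (s : ℕ) : ℝ) * 2 * v := by
      push_cast
      rw [Finset.sum_mul, Finset.sum_mul]
      apply Finset.sum_congr rfl
      intro x _; ring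
    rw [this]
    have h2 : ((∑ s ∈ Finset.range T, s) * 2 : ℕ) = T * (T - 1) :=
      Finset.sum_range_id_mul_two T
    have h3 : ((∑ s ∈ Finset.range T, s : ℕ) : ℝ) * 2 = (T : ℝ) * ((T : ℝ) - 1) := by
      have := congrArg (Nat.cast (R := ℝ)) h2
      push_cast [Nat.cast_sub hT] at this
      push_cast
      linarith
    push_cast at h3
    rw [h3]
  have hmain : ∑ t ∈ Finset.range T, Finset.univ.sup' hne (fun n => y t n)
      ≤ (∑ s ∈ Finset.range T, y s m0) + (T : ℝ) * ((T : ℝ) - 1) * v := by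
    rw [← hsum]
    exact Finset.sum_le_sum key
  linarith
end

section
/- Within a single batch, the dynamic oracle exceeds the best fixed expert by at most twice the batch length times the batch's total variation: if y_t^n ∈ [0,1] for t in an interval I of length Δ, and V_I = Σ_{t∈I, t+1∈I} sup_n |y_t^n − y_{t+1}^n|, then Σ_{t∈I} max_n y_t^n − max_n Σ_{t∈I} y_t^n ≤ Δ · V_I. -/
/-!
Let `t₀` be the step of the batch with the largest best reward and `n₀` an expert attaining it.
Along the batch the reward of `n₀` drifts by at most the total variation `V`, so at every step
the best reward is at most `y t n₀ + V`. Summing over the `Δ` steps, the dynamic oracle collects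
at most `Δ V` more than the fixed expert `n₀`, hence at most `Δ V` more than the best fixed expert.
-/

open Finset

variable {ι : Type*} {s : Finset ι} (hs : s.Nonempty) (y : ℕ → ι → ℝ)

lemma abs_sub_le_sum_Ico_sup'_abs_sub {a b t u : ℕ} {n : ι} (hn : n ∈ s)
    (ht : t ∈ Icc a b) (hu : u ∈ Icc a b) :
    |y t n - y u n| ≤ ∑ k ∈ Ico a b, s.sup' hs (fun m => |y k m - y (k + 1) m|) := by
  wlog htu : t ≤ u generalizing t u
  · rw [abs_sub_comm]
    exact this hu ht (le_of_not_ge htu)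
  rw [mem_Icc] at ht hu
  calc |y t n - y u n| ≤ ∑ k ∈ Ico t u, |y k n - y (k + 1) n| := by
        simpa only [Real.dist_eq] using dist_le_Ico_sum_dist (fun k => y k n) htu
    _ ≤ ∑ k ∈ Ico t u, s.sup' hs (fun m => |y k m - y (k + 1) m|) :=
        sum_le_sum fun k _ => le_sup' (fun m => |y k m - y (k + 1) m|) hn
    _ ≤ ∑ k ∈ Ico a b, s.sup' hs (fun m => |y k m - y (k + 1) m|) :=
        sum_le_sum_of_subset_of_nonneg (Ico_subset_Ico ht.1 hu.2) fun k _ _ =>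
          (abs_nonneg _).trans (le_sup' (fun m => |y k m - y (k + 1) m|) hn)

lemma sum_sup'_sub_sup'_sum_le_card_mul_variation (a b : ℕ) :
    ∑ t ∈ Icc a b, s.sup' hs (y t) - s.sup' hs (fun n => ∑ t ∈ Icc a b, y t n) ≤
      #(Icc a b) * ∑ k ∈ Ico a b, s.sup' hs (fun m => |y k m - y (k + 1) m|) := by
  set V := ∑ k ∈ Ico a b, s.sup' hs (fun m => |y k m - y (k + 1) m|)
  rcases (Icc a b).eq_empty_or_nonempty with hI | hI
  · simp [hI]
  obtain ⟨t₀, ht₀, ht₀_max⟩ := (Icc a b).exists_max_image (fun t => s.sup' hs (y t)) hI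
  obtain ⟨n₀, hn₀, hn₀_eq⟩ := s.exists_mem_eq_sup' hs (y t₀)
  have step_le : ∀ t ∈ Icc a b, s.sup' hs (y t) ≤ y t n₀ + V := fun t ht => by
    have drift := abs_sub_le_sum_Ico_sup'_abs_sub hs y hn₀ ht₀ ht
    have best_at_t₀ := ht₀_max t ht
    linarith [le_abs_self (y t₀ n₀ - y t n₀)]
  calc ∑ t ∈ Icc a b, s.sup' hs (y t) - s.sup' hs (fun n => ∑ t ∈ Icc a b, y t n)
      ≤ ∑ t ∈ Icc a b, (y t n₀ + V) - ∑ t ∈ Icc a b, y t n₀ :=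
        sub_le_sub (sum_le_sum step_le) (le_sup' (fun n => ∑ t ∈ Icc a b, y t n) hn₀)
    _ = #(Icc a b) * V := by
        rw [sum_add_distrib, sum_const, nsmul_eq_mul]
        ring

theorem stmt_5_general (N τ Δ : ℕ)
    (hne : (Finset.univ : Finset (Fin N)).Nonempty)
    (y : ℕ → Fin N → ℝ) :
    (∑ t ∈ Finset.Icc (τ + 1) (τ + Δ), Finset.univ.sup' hne (fun n => y t n)) -
      Finset.univ.sup' hne (fun n => ∑ t ∈ Finset.Icc (τ + 1) (τ + Δ), y t n) ≤
      (Δ : ℝ) * ∑ t ∈ Finset.Ico (τ + 1) (τ + Δ),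
        Finset.univ.sup' hne (fun n => |y t n - y (t + 1) n|) := by
  have hcard : #(Icc (τ + 1) (τ + Δ)) = Δ := by simp
  simpa only [hcard] using sum_sup'_sub_sup'_sum_le_card_mul_variation hne y (τ + 1) (τ + Δ)

/-- Within a single batch `I = {τ+1, …, τ+Δ}`, the dynamic oracle exceeds the
best fixed expert by at most the batch length times the batch's total variation. -/
theorem stmt_5 (N τ Δ : ℕ) (hN : 0 < N) (hΔ : 1 ≤ Δ)
    (hne : (Finset.univ : Finset (Fin N)).Nonempty)
    (y : ℕ → Fin N → ℝ)
    (hy : ∀ t ∈ Finset.Icc (τ + 1) (τ + Δ), ∀ n, y t n ∈ Set.Icc (0:ℝ) 1) :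
    (∑ t ∈ Finset.Icc (τ + 1) (τ + Δ), Finset.univ.sup' hne (fun n => y t n)) -
      Finset.univ.sup' hne (fun n => ∑ t ∈ Finset.Icc (τ + 1) (τ + Δ), y t n) ≤
      (Δ : ℝ) * ∑ t ∈ Finset.Ico (τ + 1) (τ + Δ),
        Finset.univ.sup' hne (fun n => |y t n - y (t + 1) n|) :=
  stmt_5_general N τ Δ hne y
end
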